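/- arXiv:1301.4620 — 7 statements merged into one kernel-verified Lean document; each statement's English description precedes it below -/
import Mathlib

section
/- Let F be a finite field with primitive element a and n = |F|−1. Fix integers α with 2α ≤ n−1. Suppose c(x) ∈ F[x], deg c ≤ n−1, has roots a^0, a^1, …, a^{n−α−1} (i.e., c lies in the RS code C_{0α}), and let c'(x) = Σ_i c_i (a^α x)^i where c_i are the coefficients of c. If c' also has roots a^0, …, a^{n−α−1}, then c = 0. -/
theorem stmt3 {F : Type*} [Field F] [Fintype F] (a : F) (n α : ℕ)
    (hn : n = Fintype.card F - 1) (ha : IsPrimitiveRoot a n)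
    (hα : 2 * α + 1 ≤ n) (c : Polynomial F) (hdeg : c.degree < (n : ℕ))
    (hroots : ∀ i < n - α, c.eval (a ^ i) = 0)
    (hroots' : ∀ i < n - α,
      (c.comp (Polynomial.C (a ^ α) * Polynomial.X)).eval (a ^ i) = 0) :
    c = 0 := by
  classical
  by_contra hc
  have hroot_all : ∀ i < n, c.eval (a ^ i) = 0 := by
    intro i hi
    rcases lt_or_ge i (n - α) with h | h
    · exact hroots i h
    · have hαi : α ≤ i := le_trans (by omega) h
      have hj : i - α < n - α := by omega
      have := hroots' (i - α) hj
      rw [Polynomial.eval_comp, Polynomial.eval_mul, Polynomial.eval_C,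
        Polynomial.eval_X] at this
      rwa [← pow_add, Nat.add_sub_cancel' hαi] at this
  have hndeg : c.natDegree < n :=
    (Polynomial.natDegree_lt_iff_degree_lt hc).mpr (by simpa using hdeg)
  set s : Finset F := (Finset.range n).image (a ^ ·) with hs
  have hcard : s.card = n := by
    rw [hs, Finset.card_image_of_injOn, Finset.card_range]
    intro i hi j hj hij
    exact ha.pow_inj (Finset.mem_range.mp hi) (Finset.mem_range.mp hj) hij
  have hsub : s ⊆ c.roots.toFinset := by
    intro x hx
    simp only [hs, Finset.mem_image, Finset.mem_range] at hx
    obtain ⟨i, hi, rfl⟩ := hx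
    simp [Polynomial.mem_roots, hc, hroot_all i hi]
  have : n ≤ c.natDegree := by
    calc n = s.card := hcard.symm
    _ ≤ c.roots.toFinset.card := Finset.card_le_card hsub
    _ ≤ Multiset.card c.roots := c.roots.toFinset_card_le
    _ ≤ c.natDegree := c.card_roots'
  omega
end

section
/- Let F be a finite field, a primitive in F, n = |F|−1, and 1 ≤ k ≤ n. Let g(x) = ∏_{j=1}^{n−k}(x−a^j). Then g has exactly n−k+1 nonzero coefficients; equivalently, every coefficient g_0, g_1, …, g_{n−k} of g is nonzero. -/
/-!
With `g = ∏_{j=1}^{m} (X - q^j)`, substituting `qX` gives the identity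
`q^m (X - 1) g(X) = (X - q^m) g(qX)`, whose coefficient of `X^(i+1)` is the recurrence
`(q^m - q^i) g_i = q^m (1 - q^(i+1)) g_(i+1)`. For a primitive `n`-th root `q` and `m < n`
we have `q ≠ 0` and `q^j ≠ 1` for `1 ≤ j ≤ m`, so nonvanishing propagates downwards from the
leading coefficient `g_m = 1`.
-/

open Polynomial Finset

namespace Polynomial

variable {R : Type*} [CommRing R]

lemma prod_Icc_one_X_sub_C_pow (q : R) (m : ℕ) :
    ∏ j ∈ Icc 1 m, (X - C (q ^ j)) = ∏ i ∈ range m, (X - C (q ^ (i + 1))) := by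
  rw [range_eq_Ico, prod_Ico_add' (fun j => X - C (q ^ j)), zero_add, Ico_add_one_right_eq_Icc]

lemma natDegree_prod_range_X_sub_C_pow [Nontrivial R] (q : R) (m : ℕ) :
    (∏ i ∈ range m, (X - C (q ^ (i + 1)))).natDegree = m := by
  rw [natDegree_prod_of_monic _ _ fun i _ => monic_X_sub_C _]
  simp only [natDegree_X_sub_C, sum_const, card_range, smul_eq_mul, mul_one]

/-- Substituting `q X` shifts every root `q ^ (i + 1)` down to `q ^ i`, and multiplying by
`X - 1` resp. `X - q ^ m` completes both products to `∏ i ≤ m, (X - q ^ i)`. -/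
lemma C_pow_mul_X_sub_one_mul_prod_range (q : R) (m : ℕ) :
    C (q ^ m) * ((X - 1) * ∏ i ∈ range m, (X - C (q ^ (i + 1)))) =
      (X - C (q ^ m)) * (∏ i ∈ range m, (X - C (q ^ (i + 1)))).comp (C q * X) := by
  have hfactor (i : ℕ) : (X - C (q ^ (i + 1))).comp (C q * X) = C q * (X - C (q ^ i)) := by
    rw [sub_comp, X_comp, C_comp, pow_succ', C_mul]
    ring
  have hshift := (prod_range_succ' (fun i => X - C (q ^ i)) m).symm.trans
    (prod_range_succ (fun i => X - C (q ^ i)) m)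
  rw [pow_zero, C_1] at hshift
  rw [prod_comp, prod_congr rfl fun i _ => hfactor i, prod_mul_distrib, prod_const, card_range,
    ← C_pow, mul_comm (X - 1), hshift]
  ring

lemma coeff_prod_range_X_sub_C_pow_recurrence (q : R) (m i : ℕ) :
    (q ^ m - q ^ i) * (∏ j ∈ range m, (X - C (q ^ (j + 1)))).coeff i =
      q ^ m * (1 - q ^ (i + 1)) * (∏ j ∈ range m, (X - C (q ^ (j + 1)))).coeff (i + 1) := by
  have h := congrArg (coeff · (i + 1)) (C_pow_mul_X_sub_one_mul_prod_range q m)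
  simp only [coeff_C_mul, sub_mul, one_mul, coeff_sub, coeff_X_mul, comp_C_mul_X_coeff] at h
  linear_combination h

lemma coeff_prod_range_X_sub_C_pow_ne_zero [IsDomain R] {q : R} {m : ℕ} (hq : q ≠ 0)
    (hq_pow : ∀ j ∈ Icc 1 m, q ^ j ≠ 1) {i : ℕ} (hi : i ≤ m) :
    (∏ j ∈ range m, (X - C (q ^ (j + 1)))).coeff i ≠ 0 := by
  induction hi using Nat.decreasingInduction with
  | self =>
    have hlead := (monic_prod_of_monic (range m) (fun j => X - C (q ^ (j + 1)))
      fun j _ => monic_X_sub_C _).coeff_natDegree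
    rw [natDegree_prod_range_X_sub_C_pow] at hlead
    exact hlead ▸ one_ne_zero
  | of_succ i hi ih =>
    intro h0
    have hrec := coeff_prod_range_X_sub_C_pow_recurrence q m i
    rw [h0, mul_zero, eq_comm, mul_eq_zero, mul_eq_zero, sub_eq_zero] at hrec
    rcases hrec with (hqm | hq1) | hsucc
    · exact pow_ne_zero m hq hqm
    · exact hq_pow (i + 1) (mem_Icc.mpr ⟨by omega, hi⟩) hq1.symm
    · exact ih hsucc

end Polynomial

theorem stmt4_general {F : Type*} [Field F] (a : F) (n k : ℕ)
    (ha : IsPrimitiveRoot a n)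
    (hk : 1 ≤ k) (hkn : k ≤ n) :
    ∀ i ≤ n - k,
      (∏ j ∈ Finset.Icc 1 (n - k), (Polynomial.X - Polynomial.C (a ^ j))).coeff i ≠ 0 := by
  intro i hi
  rw [prod_Icc_one_X_sub_C_pow]
  refine coeff_prod_range_X_sub_C_pow_ne_zero (ha.ne_zero (by omega)) (fun j hj => ?_) hi
  rw [mem_Icc] at hj
  exact ha.pow_ne_one_of_pos_of_lt (by omega) (by omega)

theorem stmt4 {F : Type*} [Field F] [Fintype F] (a : F) (n k : ℕ)
    (hn : n = Fintype.card F - 1) (ha : IsPrimitiveRoot a n)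
    (hk : 1 ≤ k) (hkn : k ≤ n) :
    ∀ i ≤ n - k,
      (∏ j ∈ Finset.Icc 1 (n - k), (Polynomial.X - Polynomial.C (a ^ j))).coeff i ≠ 0 :=
  stmt4_general a n k ha hk hkn
end

section
/- Let F be a finite field, a primitive, n = |F|−1, k < d ≤ n−1. Let g(x)=∏_{j=1}^{n−k}(x−a^j), f(x)=∏_{j=1}^{n−d}(x−a^j). Let G_k be the k×n matrix whose i-th row is the coefficient vector of x^{i−1} g(x), and B the (d−k)×n matrix whose i-th row is the coefficient vector of x^{i−1} f(x). Then the d×n matrix G obtained by stacking G_k on top of B has rank d over F. -/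
/-!
The rows of `G` are the coefficient vectors of `X ^ i * g` (`i < k`) and `X ^ i * f`
(`i < d - k`), of degrees `n - k + i` and `n - d + i`. These `d` nonzero polynomials have pairwise
distinct degrees below `n`, and polynomials of distinct degrees are linearly independent
(the leading terms cannot cancel), so the rank is `d`.
-/

open Polynomial Function

theorem Polynomial.linearIndependent_of_injective_natDegree {K ι : Type*} [Field K]
    {p : ι → K[X]} (hp : ∀ i, p i ≠ 0) (hdeg : Injective fun i ↦ (p i).natDegree) :
    LinearIndependent K p := by
  refine linearIndependent_iff'.mpr fun s c hsum i hi ↦ ?_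
  have hdisjoint : Set.Pairwise {j | j ∈ s ∧ c j • p j ≠ 0}
      (Ne on degree ∘ fun j ↦ c j • p j) := by
    rintro x ⟨-, hx⟩ y ⟨-, hy⟩ hxy
    simp only [onFun, comp_apply, smul_eq_C_mul,
      degree_C_mul (left_ne_zero_of_smul hx), degree_C_mul (left_ne_zero_of_smul hy),
      degree_eq_natDegree (hp x), degree_eq_natDegree (hp y), ne_eq, Nat.cast_inj]
    exact hdeg.ne hxy
  have hsup := degree_sum_eq_of_disjoint _ s hdisjoint
  rw [hsum, degree_zero, eq_comm, Finset.sup_eq_bot_iff] at hsup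
  exact (smul_eq_zero.mp (degree_eq_bot.mp (hsup i hi))).resolve_right (hp i)

theorem Polynomial.rank_of_coeff_of_injective_natDegree {K m : Type*} [Field K] [Fintype m]
    {n : ℕ} {p : m → K[X]} (hp : ∀ i, p i ≠ 0) (hdeg : Injective fun i ↦ (p i).natDegree)
    (hlt : ∀ i, (p i).natDegree < n) :
    (Matrix.of fun i (j : Fin n) ↦ (p i).coeff j).rank = Fintype.card m := by
  let q : m → degreeLT K n := fun i ↦
    ⟨p i, mem_degreeLT.2 ((natDegree_lt_iff_degree_lt (hp i)).1 (hlt i))⟩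
  have hq : LinearIndependent K q :=
    .of_comp (degreeLT K n).subtype (linearIndependent_of_injective_natDegree hp hdeg)
  exact (hq.map' _ (degreeLTEquiv K n).ker).rank_matrix

theorem rank_stacked_shifts {K : Type*} [Field K] {g f : K[X]} {n k d : ℕ}
    (hg0 : g ≠ 0) (hf0 : f ≠ 0)
    (hg : g.natDegree = n - k) (hf : f.natDegree = n - d) (hdn : d ≤ n) :
    (Matrix.of fun (i : Fin d) (j : Fin n) ↦
      if (i : ℕ) < k then (X ^ (i : ℕ) * g).coeff j else (X ^ ((i : ℕ) - k) * f).coeff j).rank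
      = d := by
  let P : Fin d → K[X] := fun i ↦
    if (i : ℕ) < k then X ^ (i : ℕ) * g else X ^ ((i : ℕ) - k) * f
  have hP0 : ∀ i, P i ≠ 0 := fun i ↦ by
    unfold P; split <;> exact mul_ne_zero (pow_ne_zero _ X_ne_zero) ‹_›
  have hPdeg : ∀ i, (P i).natDegree = if (i : ℕ) < k then n - k + i else n - d + (i - k) := by
    intro i; unfold P; split <;> simp [natDegree_X_pow_mul, hg0, hf0, hg, hf]
  calc _ = (Matrix.of fun i (j : Fin n) ↦ (P i).coeff j).rank := by
        congr 1
        ext i j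
        simp only [Matrix.of_apply, P]
        split <;> rfl
    _ = d := by
      rw [rank_of_coeff_of_injective_natDegree hP0, Fintype.card_fin]
      · intro i j hij
        simp only [hPdeg] at hij
        have := i.isLt; have := j.isLt
        ext; split_ifs at hij <;> omega
      · intro i; rw [hPdeg]; have := i.isLt; split_ifs <;> omega

theorem stmt7_general {F : Type*} [Field F] (a : F) (n k d : ℕ)
    (hdn : d ≤ n - 1) :
    let g := ∏ j ∈ Finset.Icc 1 (n - k), (Polynomial.X - Polynomial.C (a ^ j))
    let f := ∏ j ∈ Finset.Icc 1 (n - d), (Polynomial.X - Polynomial.C (a ^ j))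
    let G : Matrix (Fin d) (Fin n) F := fun i j =>
      if (i : ℕ) < k then (Polynomial.X ^ (i : ℕ) * g).coeff j
      else (Polynomial.X ^ ((i : ℕ) - k) * f).coeff j
    G.rank = d := by
  intro g f G
  exact rank_stacked_shifts (monic_prod_X_sub_C _ _).ne_zero (monic_prod_X_sub_C _ _).ne_zero
    (by rw [natDegree_finsetProd_X_sub_C_eq_card, Nat.card_Icc, Nat.add_sub_cancel])
    (by rw [natDegree_finsetProd_X_sub_C_eq_card, Nat.card_Icc, Nat.add_sub_cancel]) (by omega)

theorem stmt7 {F : Type*} [Field F] [Fintype F] (a : F) (n k d : ℕ)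
    (hn : n = Fintype.card F - 1) (ha : IsPrimitiveRoot a n)
    (hkd : k < d) (hdn : d ≤ n - 1) :
    let g := ∏ j ∈ Finset.Icc 1 (n - k), (Polynomial.X - Polynomial.C (a ^ j))
    let f := ∏ j ∈ Finset.Icc 1 (n - d), (Polynomial.X - Polynomial.C (a ^ j))
    let G : Matrix (Fin d) (Fin n) F := fun i j =>
      if (i : ℕ) < k then (Polynomial.X ^ (i : ℕ) * g).coeff j
      else (Polynomial.X ^ ((i : ℕ) - k) * f).coeff j
    G.rank = d :=
  stmt7_general a n k d hdn
end

section
/- With the setup of the stacked matrix G = [G_k; B] built from shifts of g(x)=∏_{j=1}^{n−k}(x−a^j) and f(x)=∏_{j=1}^{n−d}(x−a^j): if u(x)g(x) = −f(x)·Σ_{i=0}^{ℓ−1} b_i x^{j_i−1} for some polynomial u and some scalars b_i with 1 ≤ j_0 < … < j_{ℓ−1} ≤ d−k−1 and ℓ ≤ d−k−1, then all b_i = 0 and u = 0. -/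
/-! The identity says `g ∣ f · p` with `p = ∑ bᵢ X^(jᵢ-1)`. Since `deg f + deg p ≤ (n - d) + (d - k - 2)`
is smaller than `deg g = n - k`, this forces `f · p = 0`, hence `p = 0` and then `u = 0`; the `bᵢ`
are the coefficients of `p` at the distinct exponents `jᵢ - 1`, so they vanish too. -/

open Polynomial

namespace Polynomial

theorem natDegree_sum_C_mul_X_pow_le {R ι : Type*} [Semiring R] [Fintype ι] (b : ι → R)
    {e : ι → ℕ} {m : ℕ} (he : ∀ i, e i ≤ m) :
    (∑ i, C (b i) * X ^ e i).natDegree ≤ m :=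
  natDegree_sum_le_of_forall_le _ _ fun i _ => (natDegree_C_mul_X_pow_le _ _).trans (he i)

theorem coeff_sum_C_mul_X_pow_of_injective {R ι : Type*} [Semiring R] [Fintype ι] (b : ι → R)
    {e : ι → ℕ} (he : Function.Injective e) (i : ι) :
    (∑ i', C (b i') * X ^ e i').coeff (e i) = b i := by
  rw [finsetSum_coeff, Finset.sum_eq_single i]
  · simp
  · intro i' _ hi'
    rw [coeff_C_mul_X_pow, if_neg (he.ne hi').symm]
  · simp

theorem eq_zero_of_sum_C_mul_X_pow_eq_zero {R ι : Type*} [Semiring R] [Fintype ι] {b : ι → R}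
    {e : ι → ℕ} (he : Function.Injective e) (h : ∑ i, C (b i) * X ^ e i = 0) (i : ι) :
    b i = 0 := by
  rw [← coeff_sum_C_mul_X_pow_of_injective b he i, h, coeff_zero]

theorem eq_zero_and_eq_zero_of_mul_eq_mul_of_natDegree_lt {R : Type*} [CommRing R] [IsDomain R]
    {u g f q : R[X]} (hg : g ≠ 0) (hf : f ≠ 0) (h : u * g = f * q)
    (hdeg : f.natDegree + q.natDegree < g.natDegree) : u = 0 ∧ q = 0 := by
  have hfq : f * q = 0 :=
    eq_zero_of_dvd_of_natDegree_lt ⟨u, by rw [← h, mul_comm]⟩ (natDegree_mul_le.trans_lt hdeg)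
  refine ⟨?_, (mul_eq_zero.1 hfq).resolve_left hf⟩
  rw [hfq] at h
  exact (mul_eq_zero.1 h).resolve_right hg

end Polynomial

theorem stmt8_general {F : Type*} [Field F] (a : F) (n k d : ℕ)
    (hkd : k < d) (hdn : d ≤ n - 1)
    (ℓ : ℕ) (j : Fin ℓ → ℕ) (hjmono : StrictMono j)
    (hj1 : ∀ i, 1 ≤ j i) (hjd : ∀ i, j i ≤ d - k - 1)
    (b : Fin ℓ → F) (u : Polynomial F)
    (heq : u * (∏ t ∈ Finset.Icc 1 (n - k), (Polynomial.X - Polynomial.C (a ^ t))) =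
      -((∏ t ∈ Finset.Icc 1 (n - d), (Polynomial.X - Polynomial.C (a ^ t))) *
        ∑ i, Polynomial.C (b i) * Polynomial.X ^ (j i - 1))) :
    (∀ i, b i = 0) ∧ u = 0 := by
  set g := ∏ t ∈ Finset.Icc 1 (n - k), (X - C (a ^ t))
  set f := ∏ t ∈ Finset.Icc 1 (n - d), (X - C (a ^ t))
  set p := ∑ i, C (b i) * X ^ (j i - 1)
  have hp : p.natDegree ≤ d - k - 2 :=
    natDegree_sum_C_mul_X_pow_le b fun i => by have := hj1 i; have := hjd i; omega
  have hdeg : f.natDegree + (-p).natDegree < g.natDegree := by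
    simp only [f, g, natDegree_finsetProd_X_sub_C_eq_card, Nat.card_Icc, natDegree_neg]
    omega
  obtain ⟨hu, hp0⟩ := eq_zero_and_eq_zero_of_mul_eq_mul_of_natDegree_lt
    (monic_prod_X_sub_C _ _).ne_zero (monic_prod_X_sub_C _ _).ne_zero
    (heq.trans (mul_neg f p).symm) hdeg
  have hjinj : Function.Injective fun i => j i - 1 :=
    fun i i' h => hjmono.injective (by have := hj1 i; have := hj1 i'; simp only at h; omega)
  exact ⟨eq_zero_of_sum_C_mul_X_pow_eq_zero hjinj (neg_eq_zero.1 hp0), hu⟩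

theorem stmt8 {F : Type*} [Field F] [Fintype F] (a : F) (n k d : ℕ)
    (hn : n = Fintype.card F - 1) (ha : IsPrimitiveRoot a n)
    (hkd : k < d) (hdn : d ≤ n - 1)
    (ℓ : ℕ) (hℓ : ℓ ≤ d - k - 1) (j : Fin ℓ → ℕ) (hjmono : StrictMono j)
    (hj1 : ∀ i, 1 ≤ j i) (hjd : ∀ i, j i ≤ d - k - 1)
    (b : Fin ℓ → F) (u : Polynomial F)
    (heq : u * (∏ t ∈ Finset.Icc 1 (n - k), (Polynomial.X - Polynomial.C (a ^ t))) =
      -((∏ t ∈ Finset.Icc 1 (n - d), (Polynomial.X - Polynomial.C (a ^ t))) *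
        ∑ i, Polynomial.C (b i) * Polynomial.X ^ (j i - 1))) :
    (∀ i, b i = 0) ∧ u = 0 :=
  stmt8_general a n k d hkd hdn ℓ j hjmono hj1 hjd b u heq
end

section
/- Let F be a finite field, a primitive, n = |F|−1, d = 2α ≤ n−1, and gcd(|F|−1, α) = 1. Let Ḡ be the α×n matrix with (i,j) entry (a^{j})^{i} for 1 ≤ i ≤ α, 0 ≤ j ≤ n−1, and let Δ be the diagonal matrix diag(γ(a^0)^α, γ(a^1)^α, …, γ(a^{n−1})^α) for some nonzero γ ∈ F. Then the 2α×n matrix G = [Ḡ; ḠΔ] has rank 2α, i.e., its rows are linearly independent. -/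
open Matrix

theorem Matrix.linearIndependent_rows_rectangular_vandermonde {R : Type*} [CommRing R] [IsDomain R]
    {m n : ℕ} (hmn : m ≤ n) {x : Fin m → R} (hx : Function.Injective x) :
    LinearIndependent R (fun i (j : Fin n) => x i ^ (j : ℕ)) :=
  -- restricting to the first `m` columns gives the rows of the square Vandermonde matrix
  (linearIndependent_rows_of_det_ne_zero (det_vandermonde_ne_zero_iff.mpr hx)).of_comp
    (LinearMap.funLeft R R (Fin.castLE hmn))

theorem Matrix.rank_of_unit_mul_rectangular_vandermonde {K : Type*} [Field K] {m n : ℕ}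
    (hmn : m ≤ n) {x : Fin m → K} (hx : Function.Injective x) (c : Fin m → Kˣ) :
    (Matrix.of fun i (j : Fin n) => (c i : K) * x i ^ (j : ℕ)).rank = m :=
  ((linearIndependent_rows_rectangular_vandermonde hmn hx).units_smul c).rank_matrix.trans
    (Fintype.card_fin m)

theorem IsPrimitiveRoot.injective_pow_succ {M : Type*} [CommMonoid M] {ζ : M} {k m : ℕ}
    (hζ : IsPrimitiveRoot ζ k) (hm : m < k) :
    Function.Injective (fun i : Fin m => ζ ^ ((i : ℕ) + 1)) := fun i j h =>
  Fin.ext (Nat.succ_injective (hζ.pow_inj (by omega) (by omega) h))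

theorem stmt12_general {F : Type*} [Field F] (a : F) (n α : ℕ)
    (ha : IsPrimitiveRoot a n)
    (hα : 2 * α + 1 ≤ n) (γ : F) (hγ : γ ≠ 0) :
    let G : Matrix (Fin (2 * α)) (Fin n) F := fun i j =>
      if (i : ℕ) < α then (a ^ (j : ℕ)) ^ ((i : ℕ) + 1)
      else γ * (a ^ (j : ℕ)) ^ α * (a ^ (j : ℕ)) ^ ((i : ℕ) - α + 1)
    G.rank = 2 * α := by
  intro G
  -- row `i` of `G` is a row of the Vandermonde matrix on the nodes `a ^ (i + 1)`, scaled by `c i`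
  let c : Fin (2 * α) → Fˣ := fun i => if (i : ℕ) < α then 1 else Units.mk0 γ hγ
  have hG : G = Matrix.of fun i (j : Fin n) => (c i : F) * (a ^ ((i : ℕ) + 1)) ^ (j : ℕ) := by
    ext i j
    simp only [G, c, Matrix.of_apply]
    split_ifs with hi
    · rw [Units.val_one, one_mul, ← pow_mul, ← pow_mul, Nat.mul_comm]
    · rw [Units.val_mk0, mul_assoc, ← pow_add, ← pow_mul, ← pow_mul,
        show α + ((i : ℕ) - α + 1) = (i : ℕ) + 1 by omega, Nat.mul_comm]
  rw [hG]
  exact rank_of_unit_mul_rectangular_vandermonde (by omega) (ha.injective_pow_succ (by omega)) c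

theorem stmt12 {F : Type*} [Field F] [Fintype F] (a : F) (n α : ℕ)
    (hn : n = Fintype.card F - 1) (ha : IsPrimitiveRoot a n)
    (hα : 2 * α + 1 ≤ n) (hgcd : Nat.gcd n α = 1) (γ : F) (hγ : γ ≠ 0) :
    let G : Matrix (Fin (2 * α)) (Fin n) F := fun i j =>
      if (i : ℕ) < α then (a ^ (j : ℕ)) ^ ((i : ℕ) + 1)
      else γ * (a ^ (j : ℕ)) ^ α * (a ^ (j : ℕ)) ^ ((i : ℕ) - α + 1)
    G.rank = 2 * α :=
  stmt12_general a n α ha hα γ hγ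
end

section
/- Let F be a finite field, a primitive, n = |F|−1, 2α ≤ n−1, gcd(n, α) = 1. Let Δ = diag(γ a^{0·α}, γ a^{1·α}, …, γ a^{(n−1)α}) with γ ≠ 0. Then for every nonzero codeword c of the RS code C_{0α} (cyclic code with generator ∏_{i=0}^{n−α−1}(x−a^i)), the vector cΔ is NOT a codeword of C_{0α}. -/
/-!
Scaling the `j`-th coordinate by `γ a^{jα}` turns the evaluation of a codeword at `a^ℓ` into `γ`
times its evaluation at `a^{ℓ+α}`. So if both `c` and `cΔ` are codewords, the polynomial
`∑ c_j x^j` vanishes at `a^0, …, a^{n-α-1}` and at `a^α, …, a^{n-1}`, i.e. at all `n` distinct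
powers of `a`; as it has only `n` coefficients, the Vandermonde determinant forces `c = 0`.
-/

lemma IsPrimitiveRoot.injective_pow_fin {M : Type*} [CommMonoid M] {ζ : M} {n : ℕ}
    (hζ : IsPrimitiveRoot ζ n) : Function.Injective fun m : Fin n => ζ ^ (m : ℕ) :=
  fun i j hij => Fin.ext (hζ.pow_inj i.2 j.2 hij)

lemma sum_twist_mul_pow {R : Type*} [CommSemiring R] {n : ℕ} (a γ : R) (α ℓ : ℕ) (c : Fin n → R) :
    ∑ j : Fin n, (γ * a ^ ((j : ℕ) * α) * c j) * (a ^ ℓ) ^ (j : ℕ) =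
      γ * ∑ j : Fin n, c j * (a ^ (ℓ + α)) ^ (j : ℕ) := by
  rw [Finset.mul_sum]
  refine Finset.sum_congr rfl fun j _ => ?_
  rw [pow_add, mul_pow, ← pow_mul', ← pow_mul']
  ring

theorem stmt18_general {F : Type*} [Field F] (a : F) (n α : ℕ)
    (ha : IsPrimitiveRoot a n)
    (hα : 2 * α + 1 ≤ n)
    (γ : F) (hγ : γ ≠ 0) (c : Fin n → F) (hc0 : c ≠ 0)
    (hc : ∀ ℓ < n - α, ∑ j, c j * (a ^ ℓ) ^ (j : ℕ) = 0) :
    ¬ ∀ ℓ < n - α, ∑ j : Fin n, (γ * a ^ ((j : ℕ) * α) * c j) * (a ^ ℓ) ^ (j : ℕ) = 0 := by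
  intro hcΔ
  have hshift : ∀ ℓ < n - α, ∑ j, c j * (a ^ (ℓ + α)) ^ (j : ℕ) = 0 := fun ℓ hℓ => by
    simpa [sum_twist_mul_pow, hγ] using hcΔ ℓ hℓ
  refine hc0 (Matrix.eq_zero_of_forall_index_sum_mul_pow_eq_zero ha.injective_pow_fin fun m => ?_)
  rcases lt_or_ge (m : ℕ) (n - α) with hm | hm
  · exact hc m hm
  · simpa [Nat.sub_add_cancel (by omega : α ≤ (m : ℕ))] using hshift (m - α) (by omega)

theorem stmt18 {F : Type*} [Field F] [Fintype F] (a : F) (n α : ℕ)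
    (hn : n = Fintype.card F - 1) (ha : IsPrimitiveRoot a n)
    (hα : 2 * α + 1 ≤ n) (hgcd : Nat.gcd n α = 1)
    (γ : F) (hγ : γ ≠ 0) (c : Fin n → F) (hc0 : c ≠ 0)
    (hc : ∀ ℓ < n - α, ∑ j, c j * (a ^ ℓ) ^ (j : ℕ) = 0) :
    ¬ ∀ ℓ < n - α, ∑ j : Fin n, (γ * a ^ ((j : ℕ) * α) * c j) * (a ^ ℓ) ^ (j : ℕ) = 0 :=
  stmt18_general a n α ha hα γ hγ c hc0 hc
end

section
/- Let F be a finite field, a primitive, n = |F|−1, and suppose d = 2α with d ≤ n−1 and gcd(n,α)=1. Let Ḡ be the α×n matrix with (i,j)-entry a^{ij} (1 ≤ i ≤ α, 0 ≤ j ≤ n−1) and Δ = diag(a^{0·α}, …, a^{(n−1)α}). Then the row space of the stacked matrix G = [Ḡ; ḠΔ] equals the [n, 2α] Reed–Solomon code C_{0d}, the cyclic code with generator polynomial ∏_{i=0}^{n−d−1}(x−a^i). -/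
/-! Row `i` of `G` is `(a^{(i+1)j})_j`, since `a^{jα} a^{j(i-α+1)} = a^{j(i+1)}`. Orthogonality of the
characters `j ↦ a^{kj}` (`∑_{j<n} z^j = 0` for an `n`-th root of unity `z ≠ 1`) shows that these rows
pass the checks at `a^ℓ`, `ℓ < n - 2α`. Conversely, Fourier inversion writes any word `c` as
`n⁻¹ ∑_{ℓ<n} c(a^ℓ) (a^{-ℓj})_j`; the checks kill the terms with `ℓ < n - 2α`, and the remaining
vectors `(a^{-ℓj})_j = (a^{(n-ℓ)j})_j` are rows of `G`. Here `n ≠ 0` in `F` because `F` contains a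
primitive `n`-th root of unity. -/

open Finset Matrix

section

variable {F : Type*} [Field F]

/-- Pairing a word `c` with `powVec n x` evaluates its polynomial `∑ cⱼ Xʲ` at `x`. -/
def powVec (n : ℕ) (x : F) : Fin n → F := fun j => x ^ (j : ℕ)

lemma powVec_dotProduct_powVec (n : ℕ) (x y : F) :
    powVec n x ⬝ᵥ powVec n y = ∑ j ∈ range n, (x * y) ^ j := by
  simp only [dotProduct, powVec, ← mul_pow]
  exact Fin.sum_univ_eq_sum_range (fun j => (x * y) ^ j) n

lemma geom_sum_eq_zero_of_pow_eq_one {z : F} {n : ℕ} (hz : z ^ n = 1) (h1 : z ≠ 1) :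
    ∑ j ∈ range n, z ^ j = 0 := by
  rw [geom_sum_eq h1, hz, sub_self, zero_div]

namespace IsPrimitiveRoot

variable {ζ : F} {n : ℕ}

lemma powVec_pow_dotProduct_powVec_pow (hζ : IsPrimitiveRoot ζ n) {k ℓ : ℕ}
    (hpos : 0 < k + ℓ) (hlt : k + ℓ < n) :
    powVec n (ζ ^ k) ⬝ᵥ powVec n (ζ ^ ℓ) = 0 := by
  rw [powVec_dotProduct_powVec, ← pow_add]
  refine geom_sum_eq_zero_of_pow_eq_one ?_ (hζ.pow_ne_one_of_pos_of_lt hpos.ne' hlt)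
  rw [pow_right_comm, hζ.pow_eq_one, one_pow]

/-- Inversion of the discrete Fourier transform `ℓ ↦ c ⬝ᵥ powVec n (ζ ^ ℓ)`. -/
lemma sum_dotProduct_smul_powVec_inv_pow (hζ : IsPrimitiveRoot ζ n) (c : Fin n → F) :
    ∑ ℓ ∈ range n, (c ⬝ᵥ powVec n (ζ ^ ℓ)) • powVec n (ζ⁻¹ ^ ℓ) = (n : F) • c := by
  have horth : ∀ j j' : Fin n,
      ∑ ℓ ∈ range n, (ζ ^ ℓ) ^ (j : ℕ) * (ζ⁻¹ ^ ℓ) ^ (j' : ℕ) = if j = j' then (n : F) else 0 := by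
    intro j j'
    have hζ0 : ζ ≠ 0 := hζ.ne_zero j.pos.ne'
    have hterm : ∀ ℓ, (ζ ^ ℓ) ^ (j : ℕ) * (ζ⁻¹ ^ ℓ) ^ (j' : ℕ) =
        (ζ ^ (j : ℕ) / ζ ^ (j' : ℕ)) ^ ℓ := fun ℓ => by
      rw [div_pow, div_eq_mul_inv, inv_pow, inv_pow, pow_right_comm, pow_right_comm ζ (j' : ℕ)]
    simp_rw [hterm]
    split_ifs with hjj
    · simp [hjj, div_self (pow_ne_zero _ hζ0)]
    · have hpow : ∀ k : ℕ, (ζ ^ k) ^ n = 1 := fun k => by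
        rw [pow_right_comm, hζ.pow_eq_one, one_pow]
      refine geom_sum_eq_zero_of_pow_eq_one (by rw [div_pow, hpow, hpow, div_one]) ?_
      rw [Ne, div_eq_one_iff_eq (pow_ne_zero _ hζ0)]
      exact fun h => hjj (Fin.ext (hζ.pow_inj j.isLt j'.isLt h))
  ext j'
  simp only [Finset.sum_apply, Pi.smul_apply, smul_eq_mul, dotProduct, powVec, sum_mul]
  rw [sum_comm]
  simp_rw [mul_assoc, ← mul_sum, horth, mul_ite, mul_zero, sum_ite_eq', mem_univ, if_true,
    mul_comm]

lemma mem_span_powVec_iff (hζ : IsPrimitiveRoot ζ n) (d : ℕ) (c : Fin n → F) :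
    c ∈ Submodule.span F (Set.range fun i : Fin d => powVec n (ζ ^ ((i : ℕ) + 1))) ↔
      ∀ ℓ < n - d, c ⬝ᵥ powVec n (ζ ^ ℓ) = 0 := by
  constructor
  · intro hc ℓ hℓ
    obtain ⟨b, rfl⟩ := (Submodule.mem_span_range_iff_exists_fun F).mp hc
    rw [sum_dotProduct]
    refine sum_eq_zero fun i _ => ?_
    rw [smul_dotProduct, hζ.powVec_pow_dotProduct_powVec_pow (by omega) (by omega), smul_zero]
  · intro h
    rcases Nat.eq_zero_or_pos n with rfl | hn
    · exact Subsingleton.elim 0 c ▸ Submodule.zero_mem _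
    have : NeZero n := NeZero.of_pos hn
    have : NeZero (n : F) := hζ.neZero'
    rw [← inv_smul_smul₀ (NeZero.ne (n : F)) c, ← hζ.sum_dotProduct_smul_powVec_inv_pow]
    refine Submodule.smul_mem _ _ (Submodule.sum_mem _ fun ℓ hℓ => ?_)
    rw [mem_range] at hℓ
    by_cases hℓd : ℓ < n - d
    · rw [h ℓ hℓd, zero_smul]
      exact Submodule.zero_mem _
    · have hrow : powVec n (ζ ^ ((n - ℓ - 1 : ℕ) + 1)) = powVec n (ζ⁻¹ ^ ℓ) := by
        rw [Nat.sub_add_cancel (by omega), pow_sub₀ _ (hζ.ne_zero hn.ne') hℓ.le, hζ.pow_eq_one,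
          one_mul, inv_pow]
      exact Submodule.smul_mem _ _ (Submodule.subset_span ⟨⟨n - ℓ - 1, by omega⟩, hrow⟩)

end IsPrimitiveRoot

end

theorem stmt19_general {F : Type*} [Field F] (a : F) (n α d : ℕ)
    (ha : IsPrimitiveRoot a n)
    (hd : d = 2 * α)
    (G : Fin (2 * α) → Fin n → F)
    (hG : ∀ i j, G i j = if (i : ℕ) < α then (a ^ (j : ℕ)) ^ ((i : ℕ) + 1)
          else (a ^ (j : ℕ)) ^ α * (a ^ (j : ℕ)) ^ ((i : ℕ) - α + 1)) :
    ∀ c : Fin n → F, c ∈ Submodule.span F (Set.range G) ↔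
      ∀ ℓ < n - d, ∑ j, c j * (a ^ ℓ) ^ (j : ℕ) = 0 := by
  have hrows : G = fun i : Fin (2 * α) => powVec n (a ^ ((i : ℕ) + 1)) := by
    ext i j
    rw [hG, powVec]
    split_ifs with hi
    · rw [← pow_mul, ← pow_mul, mul_comm]
    · rw [← pow_add, show α + ((i : ℕ) - α + 1) = (i : ℕ) + 1 by omega, ← pow_mul, ← pow_mul,
        mul_comm]
  subst hrows hd
  exact ha.mem_span_powVec_iff (2 * α)

theorem stmt19 {F : Type*} [Field F] [Fintype F] (a : F) (n α d : ℕ)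
    (hn : n = Fintype.card F - 1) (ha : IsPrimitiveRoot a n)
    (hd : d = 2 * α) (hdn : d ≤ n - 1) (hgcd : Nat.gcd n α = 1)
    (G : Fin (2 * α) → Fin n → F)
    (hG : ∀ i j, G i j = if (i : ℕ) < α then (a ^ (j : ℕ)) ^ ((i : ℕ) + 1)
          else (a ^ (j : ℕ)) ^ α * (a ^ (j : ℕ)) ^ ((i : ℕ) - α + 1)) :
    ∀ c : Fin n → F, c ∈ Submodule.span F (Set.range G) ↔
      ∀ ℓ < n - d, ∑ j, c j * (a ^ ℓ) ^ (j : ℕ) = 0 :=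
  stmt19_general a n α d ha hd G hG
end
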